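/- Let X be an abelian group admitting a short exact sequence 0 → ℤ/2 →j X →q ℤ/4 → 0. Let i : ℤ/2 → ℤ/4 denote the injection x ↦ 2x and p : ℤ/4 → ℤ/2 the reduction modulo 2, so that 0 → ℤ/2 →i ℤ/4 →p ℤ/2 → 0 is the standard non-split short exact sequence. Suppose there exist a homomorphism f : ℤ/4 → X and an injective homomorphism m : ℤ/2 → ℤ/4 such that f ∘ i = j and q ∘ f = m ∘ p. Then X is isomorphic to ℤ/8. -/
import Mathlib


/-- The injection `ℤ/2 → ℤ/4`, `x ↦ 2x`. -/
def inj24 : ZMod 2 →+ ZMod 4 where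
  toFun x := 2 * (x.val : ZMod 4)
  map_zero' := by decide
  map_add' := by decide

/-- The reduction map `ℤ/4 → ℤ/2`. -/
def red42 : ZMod 4 →+ ZMod 2 :=
  (ZMod.castHom (by norm_num : (2 : ℕ) ∣ 4) (ZMod 2)).toAddMonoidHom

/-- If `0 → ℤ/2 →j X →q ℤ/4 → 0` is a short exact sequence of abelian groups
and there is a morphism from the standard non-split sequence
`0 → ℤ/2 → ℤ/4 → ℤ/2 → 0` into it which is the identity on `ℤ/2` and injective
on quotients, then `X ≅ ℤ/8`. -/
theorem statement4
    {X : Type*} [AddCommGroup X]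
    (j : ZMod 2 →+ X) (q : X →+ ZMod 4)
    (hj : Function.Injective j) (hq : Function.Surjective q)
    (hex : ∀ x : X, q x = 0 ↔ x ∈ Set.range j)
    (f : ZMod 4 →+ X) (m : ZMod 2 →+ ZMod 4)
    (hm : Function.Injective m)
    (hfi : f.comp inj24 = j)
    (hqf : q.comp f = m.comp red42) :
    Nonempty (X ≃+ ZMod 8) := by
  -- m 1 = 2
  have hm1 : m 1 = 2 := by
    have h1 : m 1 ≠ 0 := fun h => by
      have := hm (h.trans (m.map_zero).symm); exact absurd this (by decide)
    have h2 : m 1 + m 1 = 0 := by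
      rw [← m.map_add]
      have : (1 : ZMod 2) + 1 = 0 := by decide
      rw [this, m.map_zero]
    revert h2 h1; generalize m 1 = a; revert a; decide
  -- q (f 1) = 2
  have hqf1 : q (f 1) = 2 := by
    have := DFunLike.congr_fun hqf (1 : ZMod 4)
    simp only [AddMonoidHom.comp_apply] at this
    rw [this]
    have : red42 (1 : ZMod 4) = 1 := by decide
    rw [this, hm1]
  -- f 2 = j 1
  have hf2 : f 2 = j 1 := by
    have := DFunLike.congr_fun hfi (1 : ZMod 2)
    simp only [AddMonoidHom.comp_apply] at this
    have h24 : inj24 (1 : ZMod 2) = 2 := by decide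
    rw [h24] at this; exact this
  -- choose y with q y = 1
  obtain ⟨y, hy⟩ := hq 1
  -- 2y - f 1 ∈ range j
  have hker : q (2 • y - f 1) = 0 := by
    simp [hy, hqf1, map_nsmul]
  obtain ⟨ε, hε⟩ := (hex _).mp hker
  have h2y : 2 • y = f 1 + j ε := by
    rw [hε]; abel
  have hεε : ε + ε = 0 := by
    generalize ε = a; revert a; decide
  -- 4 y = j 1
  have h4y : 4 • y = j 1 := by
    have : (4 : ℕ) • y = 2 • (2 • y) := by rw [← smul_assoc]; norm_num
    rw [this, h2y]
    have : (2 : ℕ) • (f 1 + j ε) = f (2 • 1) + j (2 • ε) := by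
      rw [smul_add, map_nsmul, map_nsmul]
    rw [this]
    have hε2 : (2 : ℕ) • ε = 0 := by rw [two_nsmul]; exact hεε
    have h21 : (2 : ℕ) • (1 : ZMod 4) = 2 := by decide
    rw [hε2, h21, map_zero, add_zero, hf2]
  have hj1 : j 1 ≠ 0 := fun h => by
    have := hj (h.trans (j.map_zero).symm); exact absurd this (by decide)
  have h4y0 : 4 • y ≠ 0 := h4y ▸ hj1
  have h8y : 8 • y = 0 := by
    have e : (8 : ℕ) • y = 2 • (4 • y) := by rw [← smul_assoc]; norm_num
    rw [e, h4y, ← map_nsmul]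
    have : (2 : ℕ) • (1 : ZMod 2) = 0 := by decide
    rw [this, map_zero]
  -- addOrderOf y = 8
  have hord : addOrderOf y = 8 := by
    have hdvd : addOrderOf y ∣ 8 := addOrderOf_dvd_of_nsmul_eq_zero h8y
    have hnd : ¬ addOrderOf y ∣ 4 := fun h => h4y0 (addOrderOf_dvd_iff_nsmul_eq_zero.mp h)
    have hle : addOrderOf y ≤ 8 := Nat.le_of_dvd (by norm_num) hdvd
    interval_cases h : addOrderOf y <;>
      first | rfl | exact absurd hdvd (by decide) | exact absurd (by decide) hnd
  -- build hom ZMod 8 →+ X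
  set φ : ZMod 8 →+ X := ZMod.lift 8 ⟨zmultiplesHom X y, by
    show (8 : ℤ) • y = 0
    rw [← Nat.cast_ofNat, natCast_zsmul]; exact h8y⟩ with hφ
  have hφcoe : ∀ n : ℤ, φ (n : ZMod 8) = n • y := fun n => ZMod.lift_coe 8 _ n
  have hinj : Function.Injective φ := by
    rw [injective_iff_map_eq_zero]
    intro a ha
    obtain ⟨n, rfl⟩ := ZMod.intCast_surjective a
    rw [hφcoe] at ha
    rw [ZMod.intCast_zmod_eq_zero_iff_dvd]
    have := addOrderOf_dvd_iff_zsmul_eq_zero.mpr ha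
    rwa [hord] at this
  have hsurj : Function.Surjective φ := by
    intro x
    have hk : q (x - ((q x).val : ℤ) • y) = 0 := by
      simp only [map_sub, map_zsmul, hy]
      rw [zsmul_eq_mul, mul_one]
      push_cast
      rw [ZMod.natCast_val, ZMod.cast_id, sub_self]
    obtain ⟨δ, hδ⟩ := (hex _).mp hk
    have : δ = 0 ∨ δ = 1 := by generalize δ = a; revert a; decide
    rcases this with h0 | h1
    · have hx : x - ((q x).val : ℤ) • y = 0 := by rw [← hδ, h0, map_zero]
      exact ⟨(((q x).val : ℤ) : ZMod 8), by rw [hφcoe]; exact (sub_eq_zero.mp hx).symm⟩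
    · have hx : x - ((q x).val : ℤ) • y = j 1 := by rw [← hδ, h1]
      refine ⟨((((q x).val : ℤ) + 4 : ℤ) : ZMod 8), ?_⟩
      rw [hφcoe, add_zsmul]
      have h4 : (4 : ℤ) • y = j 1 := by
        rw [show (4 : ℤ) = ((4 : ℕ) : ℤ) by norm_num, natCast_zsmul, h4y]
      rw [h4, ← hx]; abel
  exact ⟨(AddEquiv.ofBijective φ ⟨hinj, hsurj⟩).symm⟩
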